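/- arXiv:2305.03377 — 3 statements merged into one kernel-verified Lean document; each statement's English description precedes it below -/
import Mathlib

section
/- Let f be a function on the positive integers with f(x) → ∞ as x → ∞. Then there exists an infinite pair of multiplicative complements (A,B) ∈ MC₂ such that A(x) = o(x), B(x) = o(x), and liminf_{x→∞} min{A(x),B(x)} / f(x) = 0. -/
open Filter

/-- Counting function: number of elements of `A` that are at most `x`. -/
noncomputable def cnt (A : Set ℕ) (x : ℕ) : ℕ := {a ∈ A | a ≤ x}.ncard

/-- `(A, B)` are multiplicative complements of order 2: both are sets of positive
integers and every positive integer is a product `a * b` with `a ∈ A`, `b ∈ B`. -/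
def MC2 (A B : Set ℕ) : Prop :=
  A ⊆ {n | 0 < n} ∧ B ⊆ {n | 0 < n} ∧
    ∀ n : ℕ, 0 < n → ∃ a ∈ A, ∃ b ∈ B, n = a * b

/-!
Cut the primes into consecutive blocks `(N k, N (k + 1)]`, each with reciprocal sum at least `1`,
and let `P` be the primes of the odd-numbered blocks. Take for `A` the squarefree numbers with all
prime factors in `P`, and for `B` the numbers divisible by no prime of `P` exactly once; splitting
off from `n` the primes of `P` that divide it exactly once writes `n = a * b`.

Both sets have density zero by a sieve. Modulo `q²`, the numbers `n` with `q ∣ n → q² ∣ n` fill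
at most a proportion `1 - 1/(2q)` of the residues; `B` satisfies this condition for every `q ∈ P`,
and `A` for every prime outside `P`. Both sets of primes have divergent reciprocal sum, so by the
Chinese remainder theorem the proportion left, `∏ (1 - 1/(2q)) ≤ exp (-∑ 1/(2q))`, tends to zero.

Up to `N (2k + 1)` the only primes available to `A` are those up to `N (2k)`, so
`A (N (2k + 1)) ≤ 2 ^ (N (2k) + 1)`; choosing `N (2k + 1)` so that `f` there exceeds
`(2k + 1) 2 ^ (N (2k) + 1)` makes `min (A x) (B x) / f x` small along this subsequence.
-/

open Finset Function

lemma cnt_le_card {S : Set ℕ} {x : ℕ} {s : Finset ℕ} (h : ∀ a ∈ S, a ≤ x → a ∈ s) :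
    cnt S x ≤ #s := by
  simpa [cnt, Set.ncard_coe_finset] using
    Set.ncard_le_ncard (fun a ha => h a ha.1 ha.2) s.finite_toSet

lemma cnt_le_count {S : Set ℕ} {p : ℕ → Prop} [DecidablePred p] (h : ∀ n ∈ S, p n) (x : ℕ) :
    cnt S x ≤ Nat.count p (x + 1) := by
  rw [Nat.count_eq_card_filter_range]
  exact cnt_le_card fun a ha hax => mem_filter.2 ⟨mem_range.2 (Nat.lt_succ_of_le hax), h a ha⟩

lemma Nat.count_mul_of_periodic {p : ℕ → Prop} [DecidablePred p] {M : ℕ} (hp : Periodic p M)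
    (k : ℕ) : Nat.count p (k * M) = k * Nat.count p M := by
  induction k with
  | zero => simp
  | succ k ih =>
    have hshift : (fun j => p (k * M + j)) = p := funext fun j => by
      rw [add_comm]; exact hp.nat_mul k j
    simp only [add_mul, one_mul, Nat.count_add, ih, hshift]

lemma Nat.count_le_of_periodic {p : ℕ → Prop} [DecidablePred p] {M : ℕ} (hM : 0 < M)
    (hp : Periodic p M) (x : ℕ) : Nat.count p (x + 1) ≤ (x / M + 1) * Nat.count p M := by
  rw [← Nat.count_mul_of_periodic hp]
  exact Nat.count_monotone p (by simpa [mul_comm] using Nat.lt_mul_div_succ x hM)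

lemma Nat.count_forall_le_prod {ι : Type*} [DecidableEq ι] (F : Finset ι) (m : ι → ℕ)
    (hm : (F : Set ι).Pairwise (Nat.Coprime on m)) (p : ι → ℕ → Prop)
    [∀ i, DecidablePred (p i)] (hp : ∀ i ∈ F, Periodic (p i) (m i)) :
    Nat.count (fun n => ∀ i ∈ F, p i n) (∏ i ∈ F, m i) ≤ ∏ i ∈ F, Nat.count (p i) (m i) := by
  simp only [Nat.count_eq_card_filter_range]
  rw [← Finset.card_pi F (fun i => (range (m i)).filter (p i))]
  refine card_le_card_of_injOn (fun n i _ => n % m i) (fun n hn => ?_) (fun n hn n' hn' h => ?_)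
  · simp only [coe_filter, mem_range, Set.mem_ofPred_eq] at hn
    have hm0 : ∀ i ∈ F, 0 < m i := fun i hi => Nat.pos_of_ne_zero fun h0 =>
      (prod_eq_zero hi h0 ▸ hn.1).not_ge n.zero_le
    refine Finset.mem_pi.2 fun i hi => mem_filter.2 ?_
    exact ⟨mem_range.2 (Nat.mod_lt n (hm0 i hi)), (hp i hi).map_mod_nat n ▸ hn.2 i hi⟩
  · simp only [coe_filter, mem_range, Set.mem_ofPred_eq] at hn hn'
    have hmod : ∀ i ∈ F, (m i : ℤ) ∣ n' - n := fun i hi =>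
      (Nat.modEq_iff_dvd.1 (congrFun (congrFun h i) hi))
    have hprod := Finset.prod_dvd_of_coprime
      (fun i hi j hj hij => Nat.isCoprime_iff_coprime.2 (hm hi hj hij)) hmod
    exact Nat.ModEq.eq_of_lt_of_lt (Nat.modEq_iff_dvd.2 (by exact_mod_cast hprod)) hn.1 hn'.1

lemma count_dvd_imp_sq_dvd_add_le {q : ℕ} (hq : 0 < q) :
    Nat.count (fun n => q ∣ n → q ^ 2 ∣ n) (q ^ 2) + q ≤ q ^ 2 + 1 := by
  rw [Nat.count_eq_card_filter_range]
  have hcompl := card_filter_add_card_filter_not (s := range (q ^ 2)) (fun n => q ∣ n → q ^ 2 ∣ n)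
  have hmultiples :
      (Ico 1 q).image (q * ·) ⊆ (range (q ^ 2)).filter (fun n => ¬(q ∣ n → q ^ 2 ∣ n)) := by
    intro n hn
    obtain ⟨i, hi, rfl⟩ := mem_image.1 hn
    obtain ⟨hi1, hiq⟩ := mem_Ico.1 hi
    have hlt : q * i < q ^ 2 := by rw [sq]; exact Nat.mul_lt_mul_of_pos_left hiq hq
    refine mem_filter.2 ⟨mem_range.2 hlt, fun h => ?_⟩
    exact (Nat.eq_zero_of_dvd_of_lt (h (dvd_mul_right q i)) hlt).not_gt (Nat.mul_pos hq hi1)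
  have hcard := card_le_card hmultiples
  rw [card_image_of_injective _ (mul_right_injective₀ hq.ne'), Nat.card_Ico] at hcard
  rw [card_range] at hcompl
  omega

lemma count_dvd_imp_sq_dvd_le_exp {q : ℕ} (hq : 2 ≤ q) :
    (Nat.count (fun n => q ∣ n → q ^ 2 ∣ n) (q ^ 2) : ℝ) ≤ q ^ 2 * Real.exp (-(1 / q / 2)) := by
  have hcount : (Nat.count (fun n => q ∣ n → q ^ 2 ∣ n) (q ^ 2) : ℝ) + q ≤ q ^ 2 + 1 := by
    exact_mod_cast count_dvd_imp_sq_dvd_add_le (by omega)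
  have hqR : (2 : ℝ) ≤ q := by exact_mod_cast hq
  calc _ ≤ (q : ℝ) ^ 2 * (1 - 1 / q / 2) := by
        rw [mul_sub, mul_one, show (q : ℝ) ^ 2 * (1 / q / 2) = q / 2 by field_simp]
        linarith
    _ ≤ _ := by gcongr; exact Real.one_sub_le_exp_neg _

lemma periodic_dvd_imp_sq_dvd {q M : ℕ} (hM : q ^ 2 ∣ M) :
    Periodic (fun n => q ∣ n → q ^ 2 ∣ n) M := fun n => by
  simp only [Nat.dvd_add_left hM, Nat.dvd_add_left ((dvd_pow_self q two_ne_zero).trans hM)]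

lemma prod_count_dvd_imp_sq_dvd_le_exp {F : Finset ℕ} (hF : ∀ q ∈ F, q.Prime) :
    ((∏ q ∈ F, Nat.count (fun n => q ∣ n → q ^ 2 ∣ n) (q ^ 2) : ℕ) : ℝ) ≤
      (∏ q ∈ F, q ^ 2 : ℕ) * Real.exp (-(∑ q ∈ F, (1 / q : ℝ)) / 2) := by
  push_cast
  calc _ ≤ ∏ q ∈ F, ((q : ℝ) ^ 2 * Real.exp (-(1 / q / 2))) :=
        prod_le_prod (fun _ _ => by positivity)
          fun q hq => count_dvd_imp_sq_dvd_le_exp (hF q hq).two_le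
    _ = _ := by
        rw [prod_mul_distrib, ← Real.exp_sum, sum_neg_distrib, ← sum_div, neg_div]

theorem cnt_le_of_forall_dvd_imp_sq_dvd {S : Set ℕ} {F : Finset ℕ} (hF : ∀ q ∈ F, q.Prime)
    (hS : ∀ n ∈ S, ∀ q ∈ F, q ∣ n → q ^ 2 ∣ n) (x : ℕ) :
    (cnt S x : ℝ) ≤ (x + ∏ q ∈ F, q ^ 2 : ℕ) * Real.exp (-(∑ q ∈ F, (1 / q : ℝ)) / 2) := by
  set M := ∏ q ∈ F, q ^ 2
  have hM : 0 < M := prod_pos fun q hq => pow_pos (hF q hq).pos 2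
  have hper : Periodic (fun n => ∀ q ∈ F, q ∣ n → q ^ 2 ∣ n) M := fun n =>
    propext <| forall₂_congr fun q hq =>
      Iff.of_eq (periodic_dvd_imp_sq_dvd (dvd_prod_of_mem (· ^ 2) hq) n)
  have hcoprime : (F : Set ℕ).Pairwise (Nat.Coprime on fun q => q ^ 2) := fun p hp q hq hpq =>
    Nat.Coprime.pow 2 2 ((Nat.coprime_primes (hF p hp) (hF q hq)).2 hpq)
  have hcount :
      cnt S x ≤ (x / M + 1) * ∏ q ∈ F, Nat.count (fun n => q ∣ n → q ^ 2 ∣ n) (q ^ 2) :=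
    (cnt_le_count hS x).trans <| (Nat.count_le_of_periodic hM hper x).trans <|
      Nat.mul_le_mul_left _ <| Nat.count_forall_le_prod F _ hcoprime _ fun q _ =>
        periodic_dvd_imp_sq_dvd dvd_rfl
  have hxM : (x / M + 1) * M ≤ x + M := by
    rw [add_mul, one_mul]; exact Nat.add_le_add_right (Nat.div_mul_le_self x M) M
  calc (cnt S x : ℝ) ≤ ((x / M + 1 : ℕ) : ℝ) * (M * Real.exp (-(∑ q ∈ F, (1 / q : ℝ)) / 2)) := by
        refine (Nat.cast_le.2 hcount).trans ?_
        push_cast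
        gcongr
        exact_mod_cast prod_count_dvd_imp_sq_dvd_le_exp hF
    _ ≤ _ := by rw [← mul_assoc]; gcongr; exact_mod_cast hxM

lemma exists_finset_subset_le_sum {P : Set ℕ} {g : ℕ → ℝ} (hg : 0 ≤ g)
    (h : ¬Summable (fun p : P => g p)) (C : ℝ) : ∃ F : Finset ℕ, ↑F ⊆ P ∧ C ≤ ∑ q ∈ F, g q := by
  by_contra! hlt
  refine h (summable_of_sum_le (c := C) (fun _ => hg _) fun u => ?_)
  simpa using (hlt (u.map (Embedding.subtype _)) (by simp)).le

theorem isLittleO_cnt_of_not_summable {S P : Set ℕ} (hP : ∀ p ∈ P, p.Prime)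
    (hdiv : ¬Summable (fun p : P => (1 / p : ℝ))) (hS : ∀ n ∈ S, ∀ q ∈ P, q ∣ n → q ^ 2 ∣ n) :
    (fun x => (cnt S x : ℝ)) =o[atTop] (fun x => (x : ℝ)) := by
  refine Asymptotics.isLittleO_iff.2 fun c hc => ?_
  obtain ⟨F, hFP, hsum⟩ := exists_finset_subset_le_sum (g := fun n : ℕ => (1 / n : ℝ))
    (fun n => by positivity) hdiv (-2 * Real.log (c / 2))
  have hexp : Real.exp (-(∑ q ∈ F, (1 / q : ℝ)) / 2) ≤ c / 2 := by
    rw [← Real.exp_log (half_pos hc)]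
    exact Real.exp_le_exp.2 (by linarith)
  filter_upwards [eventually_ge_atTop (∏ q ∈ F, q ^ 2)] with x hx
  have hbound := cnt_le_of_forall_dvd_imp_sq_dvd (fun q hq => hP q (hFP hq))
    (fun n hn q hq => hS n hn q (hFP hq)) x
  have hx' : ((x + ∏ q ∈ F, q ^ 2 : ℕ) : ℝ) ≤ 2 * x := by
    exact_mod_cast (show x + ∏ q ∈ F, q ^ 2 ≤ 2 * x by omega)
  rw [Real.norm_natCast, Real.norm_natCast]
  calc (cnt S x : ℝ) ≤ 2 * x * (c / 2) :=
        hbound.trans (mul_le_mul hx' hexp (Real.exp_pos _).le (by positivity))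
    _ = c * x := by ring

/-- For a set of primes `P`, the squarefree numbers all of whose prime factors lie in `P`. -/
def squarefreeOver (P : Set ℕ) : Set ℕ := (fun s : Finset ℕ => ∏ p ∈ s, p) '' {s | ↑s ⊆ P}

def powerfulOver (P : Set ℕ) : Set ℕ := {b | 0 < b ∧ ∀ p ∈ P, p ∣ b → p ^ 2 ∣ b}

lemma mem_of_prime_dvd_prod {s : Finset ℕ} (hs : ∀ p ∈ s, p.Prime) {q : ℕ} (hq : q.Prime)
    (h : q ∣ ∏ p ∈ s, p) : q ∈ s := by
  obtain ⟨p, hp, hqp⟩ := (Prime.dvd_finsetProd_iff hq.prime _).1 h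
  rwa [(Nat.prime_dvd_prime_iff_eq hq (hs p hp)).1 hqp]

lemma mc2_squarefreeOver_powerfulOver {P : Set ℕ} (hP : ∀ p ∈ P, p.Prime) :
    MC2 (squarefreeOver P) (powerfulOver P) := by
  classical
  refine ⟨?_, fun b hb => hb.1, fun n hn => ?_⟩
  · rintro _ ⟨s, hs, rfl⟩
    exact prod_pos fun p hp => (hP p (hs hp)).pos
  -- `n = a * b` with `a` the product of the primes of `P` dividing `n` exactly once.
  set s := n.primeFactors.filter (fun p => p ∈ P ∧ ¬p ^ 2 ∣ n)
  have hsP : ↑s ⊆ P := fun p hp => (mem_filter.1 hp).2.1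
  have hs_prime : ∀ p ∈ s, p.Prime := fun p hp => hP p (hsP hp)
  obtain ⟨b, hn_eq⟩ : ∏ p ∈ s, p ∣ n :=
    (prod_dvd_prod_of_subset _ _ _ (filter_subset _ _)).trans n.prod_primeFactors_dvd
  refine ⟨_, ⟨s, hsP, rfl⟩, b, ⟨Nat.pos_of_mul_pos_left (hn_eq ▸ hn), fun p hp hpb => ?_⟩, hn_eq⟩
  have hp' := hP p hp
  by_cases hpa : p ∣ ∏ p ∈ s, p
  · have hps := mem_of_prime_dvd_prod hs_prime hp' hpa
    exact absurd (hn_eq ▸ sq p ▸ mul_dvd_mul hpa hpb) (mem_filter.1 hps).2.2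
  · have hsq : p ^ 2 ∣ n := by
      by_contra hsq
      exact hpa (dvd_prod_of_mem _ (mem_filter.2
        ⟨Nat.mem_primeFactors.2 ⟨hp', hn_eq ▸ dvd_mul_of_dvd_right hpb _, hn.ne'⟩, hp, hsq⟩))
    rw [hn_eq] at hsq
    exact (Nat.Coprime.pow_left 2 ((Nat.Prime.coprime_iff_not_dvd hp').2 hpa)).dvd_of_dvd_mul_left
      hsq

lemma infinite_of_not_summable {P : Set ℕ} (h : ¬Summable (fun p : P => (1 / p : ℝ))) :
    P.Infinite := fun hfin => h (hfin.summable fun n : ℕ => (1 / n : ℝ))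

lemma infinite_squarefreeOver {P : Set ℕ} (hP : P.Infinite) : (squarefreeOver P).Infinite :=
  hP.mono fun p hp => ⟨{p}, by simpa using hp, prod_singleton _ _⟩

lemma infinite_powerfulOver {P : Set ℕ} (hP : ∀ p ∈ P, p.Prime) : (powerfulOver P).Infinite := by
  refine Set.infinite_of_injective_forall_mem (f := fun n : ℕ => (n + 1) ^ 2)
    (fun m n h => by simpa using h) fun n => ⟨by positivity, fun p hp hpn => ?_⟩
  exact pow_dvd_pow_of_dvd ((hP p hp).prime.dvd_of_dvd_pow hpn) 2

lemma isLittleO_cnt_squarefreeOver {P Q : Set ℕ} (hP : ∀ p ∈ P, p.Prime) (hQ : ∀ q ∈ Q, q.Prime)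
    (hPQ : Disjoint P Q) (hdiv : ¬Summable (fun q : Q => (1 / q : ℝ))) :
    (fun x => (cnt (squarefreeOver P) x : ℝ)) =o[atTop] (fun x => (x : ℝ)) := by
  refine isLittleO_cnt_of_not_summable hQ hdiv ?_
  rintro _ ⟨s, hsP, rfl⟩ q hq hqs
  have hqs := mem_of_prime_dvd_prod (fun p hp => hP p (hsP hp)) (hQ q hq) hqs
  exact absurd hq (hPQ.notMem_of_mem_left (hsP hqs))

lemma isLittleO_cnt_powerfulOver {P : Set ℕ} (hP : ∀ p ∈ P, p.Prime)
    (hdiv : ¬Summable (fun p : P => (1 / p : ℝ))) :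
    (fun x => (cnt (powerfulOver P) x : ℝ)) =o[atTop] (fun x => (x : ℝ)) :=
  isLittleO_cnt_of_not_summable hP hdiv fun _ hb => hb.2

lemma cnt_squarefreeOver_le {P : Set ℕ} (h0 : 0 ∉ P) {x m : ℕ} (h : ∀ p ∈ P, p ≤ x → p < m) :
    cnt (squarefreeOver P) x ≤ 2 ^ m := by
  classical
  refine (cnt_le_card (s := (range m).powerset.image fun s => ∏ p ∈ s, p) ?_).trans
    (card_image_le.trans (by rw [card_powerset, card_range]))
  rintro _ ⟨s, hsP, rfl⟩ hsx
  refine mem_image.2 ⟨s, mem_powerset.2 fun p hp => mem_range.2 (h p (hsP hp) ?_), rfl⟩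
  have hne : ∏ p ∈ s, p ≠ 0 := prod_ne_zero_iff.2 fun q hq h => h0 (h ▸ hsP hq)
  exact (Nat.le_of_dvd (Nat.pos_of_ne_zero hne) (dvd_prod_of_mem _ hp)).trans hsx

lemma eventually_one_le_sum_primes_Ioc (n : ℕ) :
    ∀ᶠ m in atTop, 1 ≤ ∑ q ∈ (Ioc n m).filter Nat.Prime, (1 / q : ℝ) := by
  set g := Set.indicator {p | p.Prime} fun n : ℕ => (1 / n : ℝ)
  have hg : ∀ i, 0 ≤ g i := fun i => Set.indicator_nonneg (fun _ _ => by positivity) i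
  have htend := (not_summable_iff_tendsto_nat_atTop_of_nonneg hg).1 not_summable_one_div_on_primes
  filter_upwards [(htend.comp (tendsto_add_atTop_nat 1)).eventually_ge_atTop
    (∑ i ∈ range (n + 1), g i + 1), eventually_ge_atTop n] with m hm hnm
  rw [sum_filter, ← Ico_add_one_add_one_eq_Ioc]
  have hsplit := sum_range_add_sum_Ico g (Nat.add_le_add_right hnm 1)
  simp only [g, Function.comp_apply, Set.indicator_apply, Set.mem_ofPred_eq] at hsplit hm
  linarith

lemma exists_blocks {f : ℕ → ℝ} (hf : Tendsto f atTop atTop) :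
    ∃ N : ℕ → ℕ, StrictMono N ∧
      (∀ k, 1 ≤ ∑ q ∈ (Ioc (N k) (N (k + 1))).filter Nat.Prime, (1 / q : ℝ)) ∧
      ∀ k, (k + 1) * 2 ^ (N k + 1) ≤ f (N (k + 1)) := by
  have hstep : ∀ k n : ℕ, ∃ m, n < m ∧ 1 ≤ ∑ q ∈ (Ioc n m).filter Nat.Prime, (1 / q : ℝ) ∧
      ((k : ℝ) + 1) * 2 ^ (n + 1) ≤ f m := fun k n =>
    ((eventually_gt_atTop n).and ((eventually_one_le_sum_primes_Ioc n).and
      (hf.eventually_ge_atTop _))).exists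
  choose next hnext using hstep
  let N : ℕ → ℕ := fun k => Nat.rec 0 next k
  exact ⟨N, strictMono_nat_of_lt_succ fun k => (hnext k (N k)).1,
    fun k => (hnext k (N k)).2.1, fun k => (hnext k (N k)).2.2⟩

def blockPrimes (N g : ℕ → ℕ) : Set ℕ := {q | q.Prime ∧ ∃ j, q ∈ Ioc (N (g j)) (N (g j + 1))}

lemma StrictMono.eq_of_mem_Ioc {N : ℕ → ℕ} (hN : StrictMono N) {i j q : ℕ}
    (hi : q ∈ Ioc (N i) (N (i + 1))) (hj : q ∈ Ioc (N j) (N (j + 1))) : i = j := by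
  rw [mem_Ioc] at hi hj
  have h₁ : i < j + 1 := hN.lt_iff_lt.1 (hi.1.trans_le hj.2)
  have h₂ : j < i + 1 := hN.lt_iff_lt.1 (hj.1.trans_le hi.2)
  omega

lemma not_summable_blockPrimes {N : ℕ → ℕ} (hN : StrictMono N)
    (hblock : ∀ k, 1 ≤ ∑ q ∈ (Ioc (N k) (N (k + 1))).filter Nat.Prime, (1 / q : ℝ))
    {g : ℕ → ℕ} (hg : Injective g) : ¬Summable (fun p : blockPrimes N g => (1 / p : ℝ)) := by
  intro hs
  set h := (blockPrimes N g).indicator fun n : ℕ => (1 / n : ℝ)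
  have hs' : Summable h := summable_subtype_iff_indicator.1 hs
  obtain ⟨K, hK⟩ := exists_nat_gt (∑' n, h n)
  set block := fun j => (Ioc (N (g j)) (N (g j + 1))).filter Nat.Prime
  have hdisj : (range K : Set ℕ).PairwiseDisjoint block := fun i _ j _ hij =>
    disjoint_left.2 fun q hqi hqj =>
      hij (hg (hN.eq_of_mem_Ioc (mem_filter.1 hqi).1 (mem_filter.1 hqj).1))
  have hsum : (K : ℝ) ≤ ∑ q ∈ (range K).biUnion block, h q := by
    calc (K : ℝ) = ∑ _j ∈ range K, 1 := by simp
      _ ≤ ∑ j ∈ range K, ∑ q ∈ block j, (1 / q : ℝ) := sum_le_sum fun j _ => hblock (g j)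
      _ = ∑ q ∈ (range K).biUnion block, h q := by
        rw [sum_biUnion hdisj]
        refine sum_congr rfl fun j _ => sum_congr rfl fun q hq => ?_
        obtain ⟨hqI, hq⟩ := mem_filter.1 hq
        exact (Set.indicator_of_mem (show q ∈ blockPrimes N g from ⟨hq, j, hqI⟩)
          fun n : ℕ => (1 / n : ℝ)).symm
  have := hs'.sum_le_tsum ((range K).biUnion block)
    fun i _ => Set.indicator_nonneg (fun n _ => by positivity) i
  linarith

lemma disjoint_blockPrimes_odd_even {N : ℕ → ℕ} (hN : StrictMono N) :
    Disjoint (blockPrimes N fun j => 2 * j + 1) (blockPrimes N fun j => 2 * j) :=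
  Set.disjoint_left.2 fun _ ⟨_, _, hi⟩ ⟨_, _, hj⟩ => by
    have := hN.eq_of_mem_Ioc hi hj
    dsimp only at this
    omega

lemma le_of_mem_blockPrimes_odd {N : ℕ → ℕ} (hN : StrictMono N) {p k : ℕ}
    (hp : p ∈ blockPrimes N fun j => 2 * j + 1) (hpk : p ≤ N (2 * k + 1)) : p ≤ N (2 * k) := by
  obtain ⟨_, j, hj⟩ := hp
  rw [mem_Ioc] at hj
  dsimp only at hj
  have hjk : 2 * j + 1 < 2 * k + 1 := hN.lt_iff_lt.1 (hj.1.trans_le hpk)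
  exact hj.2.trans (hN.monotone (by omega))

lemma liminf_div_eq_zero {u f : ℕ → ℝ} (hu : ∀ x, 0 ≤ u x) (hf : ∀ᶠ x in atTop, 0 ≤ f x)
    {φ : ℕ → ℕ} (hφ : Tendsto φ atTop atTop) (h : ∀ k : ℕ, (k + 1) * u (φ k) ≤ f (φ k)) :
    liminf (fun x => ((u x / f x : ℝ) : EReal)) atTop = 0 := by
  have hfφ : ∀ k, 0 ≤ f (φ k) := fun k => (mul_nonneg (by positivity) (hu _)).trans (h k)
  have hsub : Tendsto (fun k => u (φ k) / f (φ k)) atTop (nhds 0) :=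
    squeeze_zero (fun k => div_nonneg (hu _) (hfφ k))
      (fun k => div_le_of_le_mul₀ (hfφ k) (by positivity) (by
        rw [div_mul_eq_mul_div, one_mul, le_div_iff₀ (by positivity), mul_comm]; exact h k))
      tendsto_one_div_add_atTop_nhds_zero_nat
  refine le_antisymm ?_ ?_
  · refine hφ.liminf_le_liminf_comp.trans_eq ?_
    exact (EReal.tendsto_coe.2 hsub).liminf_eq
  · exact le_liminf_of_le (by isBoundedDefault)
      (hf.mono fun x hx => EReal.coe_nonneg.2 (div_nonneg (hu x) hx))

theorem stmt_4 (f : ℕ → ℝ) (hf : Filter.Tendsto f Filter.atTop Filter.atTop) :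
    ∃ A B : Set ℕ, MC2 A B ∧ A.Infinite ∧ B.Infinite ∧
      (fun x : ℕ => (cnt A x : ℝ)) =o[Filter.atTop] (fun x : ℕ => (x : ℝ)) ∧
      (fun x : ℕ => (cnt B x : ℝ)) =o[Filter.atTop] (fun x : ℕ => (x : ℝ)) ∧
      Filter.liminf (fun x : ℕ =>
          (((min (cnt A x) (cnt B x) : ℝ) / f x : ℝ) : EReal)) Filter.atTop = 0 := by
  obtain ⟨N, hN, hblock, hfN⟩ := exists_blocks hf
  set P := blockPrimes N fun j => 2 * j + 1
  have hP : ∀ p ∈ P, p.Prime := fun p hp => hp.1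
  have hPdiv : ¬Summable (fun p : P => (1 / p : ℝ)) :=
    not_summable_blockPrimes hN hblock fun i j h => by simpa using h
  refine ⟨squarefreeOver P, powerfulOver P, mc2_squarefreeOver_powerfulOver hP,
    infinite_squarefreeOver (infinite_of_not_summable hPdiv), infinite_powerfulOver hP,
    isLittleO_cnt_squarefreeOver hP (fun q hq => hq.1) (disjoint_blockPrimes_odd_even hN)
      (not_summable_blockPrimes hN hblock fun i j h => by simpa using h),
    isLittleO_cnt_powerfulOver hP hPdiv, ?_⟩
  refine liminf_div_eq_zero (fun x => by positivity) (hf.eventually_ge_atTop 0)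
    (StrictMono.tendsto_atTop (hN.comp fun i j h => by omega : StrictMono fun k => N (2 * k + 1)))
    fun k => ?_
  have hA : cnt (squarefreeOver P) (N (2 * k + 1)) ≤ 2 ^ (N (2 * k) + 1) :=
    cnt_squarefreeOver_le (fun h0 => Nat.not_prime_zero h0.1)
      fun p hp hpx => Nat.lt_succ_of_le (le_of_mem_blockPrimes_odd hN hp hpx)
  calc ((k : ℝ) + 1) * min _ _ ≤ ((2 * k : ℕ) + 1 : ℝ) * 2 ^ (N (2 * k) + 1) := by
        gcongr ?_ * ?_
        · push_cast; linarith
        · exact (min_le_left _ _).trans (by exact_mod_cast hA)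
    _ ≤ _ := hfN (2 * k)
end

section
/- Suppose f is a positive function on the positive integers such that the series ∑_{n=1}^{∞} f(n)/n² converges. Then there is no pair of multiplicative complements (A,B) ∈ MC₂ such that A(x) = O(f(x)) and B(x) = o(x). -/
/-!
Two estimates meet. Partial summation turns `A(x) = O(f(x))` and `∑ f(n)/n² < ∞` into
`∑_{a ∈ A} 1/a < ∞`. On the other hand, counting the representations `n = a b ≤ x` gives
`x ≤ ∑_{a ∈ A, a ≤ x} B(x/a)`. Split this sum at `x/a = N`, where `B(y) ≤ ε y` for `y ≥ N`:
the terms with `x/a ≥ N` contribute at most `ε x ∑_{a ∈ A} 1/a`, and the terms with `x/a < N`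
at most `x` times the tail `∑_{a ∈ A, a > x/N} 1/a`. Both are below `x/2` once `ε` is small
and `x` is large, a contradiction.
-/

open Filter

open Finset

section

variable {A B : Set ℕ}

open Classical in
theorem cnt_eq_card (A : Set ℕ) (x : ℕ) : cnt A x = #{a ∈ range (x + 1) | a ∈ A} := by
  rw [cnt, ← Set.ncard_coe_finset]
  congr 1
  ext a
  simp [and_comm]

theorem cnt_le_succ (A : Set ℕ) (x : ℕ) : cnt A x ≤ x + 1 := by
  classical
  simpa [cnt_eq_card] using card_filter_le (range (x + 1)) (· ∈ A)

theorem cnt_le_self (hB : 0 ∉ B) (y : ℕ) : cnt B y ≤ y := by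
  classical
  have hsub : {a ∈ range (y + 1) | a ∈ B} ⊆ Icc 1 y := fun a ha => by
    simp only [mem_filter, mem_range] at ha
    have : a ≠ 0 := fun h => hB (h ▸ ha.2)
    simp only [mem_Icc]; omega
  simpa [cnt_eq_card] using card_le_card hsub

open Classical in
theorem cnt_succ (A : Set ℕ) (x : ℕ) :
    cnt A (x + 1) = cnt A x + if x + 1 ∈ A then 1 else 0 := by
  rw [cnt_eq_card, cnt_eq_card, range_add_one (n := x + 1), filter_insert]
  split_ifs with h
  · rw [card_insert_of_notMem (by simp)]
  · rfl

open Classical in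
theorem card_filter_Icc_le_cnt (A : Set ℕ) (x : ℕ) : #{a ∈ Icc 1 x | a ∈ A} ≤ cnt A x := by
  rw [cnt_eq_card]
  refine card_le_card (filter_subset_filter _ fun a ha => ?_)
  simp only [mem_Icc, mem_range] at ha ⊢
  omega

-- The `n = 0` terms are harmless junk: `(0 : ℝ)⁻¹ = 0` and division by `0` gives `0`.
theorem sum_range_indicator_inv_le (A : Set ℕ) (m : ℕ) :
    ∑ n ∈ range (m + 1), A.indicator (fun n : ℕ => (n : ℝ)⁻¹) n ≤
      cnt A m / (m + 1) + ∑ n ∈ range (m + 1), (cnt A n : ℝ) / (n * (n + 1)) := by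
  induction m with
  | zero =>
    have h0 : A.indicator (fun n : ℕ => (n : ℝ)⁻¹) 0 = 0 :=
      Set.indicator_apply_eq_zero.2 fun _ => by simp
    simp [h0]
  | succ m ih =>
    have hstep : A.indicator (fun n : ℕ => (n : ℝ)⁻¹) (m + 1) + cnt A m / (m + 1) =
        cnt A (m + 1) / (m + 1 + 1) + cnt A (m + 1) / ((m + 1) * (m + 1 + 1)) := by
      classical
      rw [cnt_succ, Set.indicator_apply]
      split_ifs <;> push_cast <;> field_simp <;> ring
    rw [sum_range_succ, sum_range_succ _ (m + 1)]
    push_cast at hstep ⊢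
    linarith

theorem summable_indicator_inv_of_summable_cnt_div_sq
    (hA : Summable fun n : ℕ => (cnt A n : ℝ) / n ^ 2) :
    Summable (A.indicator fun n : ℕ => (n : ℝ)⁻¹) := by
  have hnonneg (n : ℕ) : 0 ≤ (cnt A n : ℝ) / n ^ 2 := by positivity
  refine summable_of_sum_range_le (c := 1 + ∑' n, (cnt A n : ℝ) / n ^ 2)
    (fun n => Set.indicator_nonneg (fun _ _ => by positivity) n) fun m => ?_
  have hfirst : (cnt A m : ℝ) / (m + 1) ≤ 1 := by
    rw [div_le_one (by positivity)]; exact_mod_cast cnt_le_succ A m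
  have hterm (n : ℕ) : (cnt A n : ℝ) / (n * (n + 1)) ≤ cnt A n / n ^ 2 := by
    rcases n.eq_zero_or_pos with rfl | hn
    · simp
    · gcongr; nlinarith
  calc ∑ n ∈ range m, A.indicator (fun n : ℕ => (n : ℝ)⁻¹) n
      ≤ ∑ n ∈ range (m + 1), A.indicator (fun n : ℕ => (n : ℝ)⁻¹) n :=
        sum_le_sum_of_subset_of_nonneg (range_subset_range.2 m.le_succ)
          fun n _ _ => Set.indicator_nonneg (fun _ _ => by positivity) n
    _ ≤ cnt A m / (m + 1) + ∑ n ∈ range (m + 1), (cnt A n : ℝ) / (n * (n + 1)) :=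
        sum_range_indicator_inv_le A m
    _ ≤ 1 + ∑' n, (cnt A n : ℝ) / n ^ 2 := by
        gcongr
        exact (sum_le_sum fun n _ => hterm n).trans (hA.sum_le_tsum _ fun n _ => hnonneg n)

open Classical in
theorem le_sum_cnt_div (hAB : ∀ n, 0 < n → ∃ a ∈ A, ∃ b ∈ B, n = a * b) (x : ℕ) :
    x ≤ ∑ a ∈ Icc 1 x with a ∈ A, cnt B (x / a) := by
  set T := {a ∈ Icc 1 x | a ∈ A}.sigma fun a => {b ∈ Icc 1 (x / a) | b ∈ B}
  have hcover : Icc 1 x ⊆ T.image fun p => p.1 * p.2 := by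
    intro n hn
    obtain ⟨hn1, hnx⟩ := mem_Icc.1 hn
    obtain ⟨a, ha, b, hb, rfl⟩ := hAB n hn1
    have ha0 : 0 < a := Nat.pos_of_mul_pos_right hn1
    have hb0 : 0 < b := Nat.pos_of_mul_pos_left hn1
    refine mem_image.2 ⟨⟨a, b⟩, mem_sigma.2 ⟨?_, ?_⟩, rfl⟩
    · simp only [mem_filter, mem_Icc]
      exact ⟨⟨ha0, le_trans (Nat.le_mul_of_pos_right a hb0) hnx⟩, ha⟩
    · simp only [mem_filter, mem_Icc]
      exact ⟨⟨hb0, (Nat.le_div_iff_mul_le ha0).2 (by rwa [mul_comm])⟩, hb⟩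
  calc x = #(Icc 1 x) := by simp
    _ ≤ #(T.image fun p => p.1 * p.2) := card_le_card hcover
    _ ≤ #T := card_image_le
    _ = ∑ a ∈ Icc 1 x with a ∈ A, #{b ∈ Icc 1 (x / a) | b ∈ B} := card_sigma _ _
    _ ≤ ∑ a ∈ Icc 1 x with a ∈ A, cnt B (x / a) :=
        sum_le_sum fun a _ => card_filter_Icc_le_cnt B (x / a)

theorem cnt_div_le (hB : 0 ∉ B) {ε : ℝ} (hε : 0 ≤ ε) {N : ℕ}
    (hN : ∀ y ≥ N, (cnt B y : ℝ) ≤ ε * y) (x : ℕ) {a : ℕ} (ha : 0 < a) :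
    (cnt B (x / a) : ℝ) ≤ ε * (x / a) + if x < N * a then (x : ℝ) / a else 0 := by
  have hdiv : ((x / a : ℕ) : ℝ) ≤ x / a := Nat.cast_div_le
  split_ifs with hx
  · have : (cnt B (x / a) : ℝ) ≤ x / a := (Nat.cast_le.2 (cnt_le_self hB _)).trans hdiv
    have : 0 ≤ ε * (x / a) := by positivity
    linarith
  · have hNx : N ≤ x / a := (Nat.le_div_iff_mul_le ha).2 (not_lt.1 hx)
    calc (cnt B (x / a) : ℝ) ≤ ε * (x / a : ℕ) := hN _ hNx
      _ ≤ ε * (x / a) + 0 := by rw [add_zero]; gcongr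

theorem not_MC2_of_summable_indicator_inv
    (hA : Summable (A.indicator fun n : ℕ => (n : ℝ)⁻¹))
    (hB : (fun x : ℕ => (cnt B x : ℝ)) =o[atTop] (fun x : ℕ => (x : ℝ))) : ¬ MC2 A B := by
  classical
  rintro ⟨-, hB0, hAB⟩
  set g := A.indicator fun n : ℕ => (n : ℝ)⁻¹
  have hg0 (n : ℕ) : 0 ≤ g n := Set.indicator_nonneg (fun _ _ => by positivity) n
  set S := ∑' n, g n
  set ε : ℝ := (2 * (S + 1))⁻¹
  have hS : 0 ≤ S := tsum_nonneg hg0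
  have hε : 0 < ε := by positivity
  have hεS : ε * S < 1 / 2 := by
    rw [inv_mul_lt_iff₀ (by positivity)]; linarith
  obtain ⟨N, hN⟩ := eventually_atTop.1 (hB.bound hε)
  simp only [Real.norm_natCast] at hN
  obtain ⟨s, hs⟩ := hA.vanishing (Iio_mem_nhds (by norm_num : (0 : ℝ) < 1 / 2))
  -- Since `x < (N + 1) * a` forces `K < a`, the small quotients `x / a` only come from `a ∉ s`.
  set K := s.sup id + 1
  set x := (N + 1) * K
  have hx : (0 : ℝ) < x := by positivity
  set F := {a ∈ Icc 1 x | a ∈ A}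
  have hterm : ∀ a ∈ F,
      (cnt B (x / a) : ℝ) ≤ x * (ε * g a) + x * if K ≤ a then g a else 0 := by
    intro a ha
    obtain ⟨ha1, haA⟩ := mem_filter.1 ha
    have ha0 : 0 < a := (mem_Icc.1 ha1).1
    have hga : g a = (a : ℝ)⁻¹ := Set.indicator_of_mem haA _
    refine (cnt_div_le (fun h => lt_irrefl 0 (hB0 h)) hε.le (N := N + 1)
      (fun y hy => hN y (by omega)) x ha0).trans ?_
    rw [hga]
    gcongr ?_ + ?_
    · exact le_of_eq (by ring)
    split_ifs with hxa hKa hKa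
    · rw [div_eq_mul_inv]
    · exact absurd (Nat.lt_of_mul_lt_mul_left hxa).le hKa
    · positivity
    · simp
  have htail : ∑ a ∈ F with K ≤ a, g a < 1 / 2 := by
    refine hs _ (disjoint_left.2 fun a ha has => ?_)
    have : a ≤ s.sup id := le_sup (f := id) has
    simp only [mem_filter] at ha
    omega
  have : (x : ℝ) < x :=
    calc (x : ℝ) ≤ ∑ a ∈ F, (cnt B (x / a) : ℝ) := by exact_mod_cast le_sum_cnt_div hAB x
      _ ≤ ∑ a ∈ F, (x * (ε * g a) + x * if K ≤ a then g a else 0) := sum_le_sum hterm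
      _ = x * (ε * ∑ a ∈ F, g a) + x * ∑ a ∈ F with K ≤ a, g a := by
        rw [sum_add_distrib, ← mul_sum, ← mul_sum, ← mul_sum, ← sum_filter]
      _ < x * (1 / 2) + x * (1 / 2) := by
        gcongr
        exact (mul_le_mul_of_nonneg_left (hA.sum_le_tsum _ fun n _ => hg0 n) hε.le).trans_lt hεS
      _ = x := by ring
  exact lt_irrefl _ this

end

theorem stmt_6_general (f : ℕ → ℝ)
    (hsum : Summable (fun n : ℕ => f (n + 1) / ((n + 1 : ℕ) : ℝ) ^ 2)) :
    ¬ ∃ A B : Set ℕ, MC2 A B ∧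
        (fun x : ℕ => (cnt A x : ℝ)) =O[Filter.atTop] (fun x : ℕ => f x) ∧
        (fun x : ℕ => (cnt B x : ℝ)) =o[Filter.atTop] (fun x : ℕ => (x : ℝ)) := by
  rintro ⟨A, B, hMC, hA, hB⟩
  have hf : Summable fun n : ℕ => f n / (n : ℝ) ^ 2 := (summable_nat_add_iff 1).1 hsum
  have hcnt : Summable fun n : ℕ => (cnt A n : ℝ) / n ^ 2 := by
    simp only [div_eq_mul_inv] at hf ⊢
    exact summable_of_isBigO_nat hf (hA.mul (Asymptotics.isBigO_refl _ _))
  exact not_MC2_of_summable_indicator_inv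
    (summable_indicator_inv_of_summable_cnt_div_sq hcnt) hB hMC

theorem stmt_6 (f : ℕ → ℝ) (hfpos : ∀ n : ℕ, 1 ≤ n → 0 < f n)
    (hsum : Summable (fun n : ℕ => f (n + 1) / ((n + 1 : ℕ) : ℝ) ^ 2)) :
    ¬ ∃ A B : Set ℕ, MC2 A B ∧
        (fun x : ℕ => (cnt A x : ℝ)) =O[Filter.atTop] (fun x : ℕ => f x) ∧
        (fun x : ℕ => (cnt B x : ℝ)) =o[Filter.atTop] (fun x : ℕ => (x : ℝ)) :=
  stmt_6_general f hsum
end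

section
/- Let (A,B) ∈ MC₂ be a pair of multiplicative complements with |B| = k finite. Then liminf_{x→∞} A(x)/x ≥ ∏_{i=1}^{k} (1 − 1/pᵢ), where pᵢ denotes the i-th smallest prime number. -/
open Filter

/-!
If `n = a * b` with `b ∈ B`, then `b ∣ n`; so when `n` is coprime to `P`, the product of the
least prime factors of the elements `b ≠ 1` of `B`, necessarily `b = 1` and `n ∈ A`. Hence `A`
contains the integers coprime to `P`, whose density is `φ(P) / P = ∏_{q ∣ P} (1 - 1/q)`, a product
over at most `k` distinct primes, and such a product is at least the one over the first `k` primes.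
-/

open Finset Topology

namespace Nat

theorem card_filter_coprime_Ico_mul (P k q : ℕ) :
    #{n ∈ Ico k (k + q * P) | P.Coprime n} = q * φ P := by
  induction q with
  | zero => simp
  | succ q ih =>
    rw [show k + (q + 1) * P = k + q * P + P by ring,
      ← Ico_union_Ico_eq_Ico (Nat.le_add_right _ _) (Nat.le_add_right _ _), filter_union,
      card_union_of_disjoint (disjoint_filter_filter (Ico_disjoint_Ico_consecutive _ _ _)),
      ih, filter_coprime_Ico_eq_totient, add_one_mul]

theorem div_mul_totient_le_card_filter_coprime (P x : ℕ) :
    x / P * φ P ≤ #{n ∈ Icc 1 x | P.Coprime n} := by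
  rw [← card_filter_coprime_Ico_mul P 1]
  exact card_le_card <| filter_subset_filter _ fun n hn => by
    simp only [mem_Ico, mem_Icc] at hn ⊢
    have := Nat.div_mul_le_self x P
    omega

theorem totient_eq_mul_prod_one_sub_inv_real (n : ℕ) :
    (φ n : ℝ) = n * ∏ p ∈ n.primeFactors, (1 - (p : ℝ)⁻¹) := by
  have h := congrArg (fun q : ℚ => (q : ℝ)) (totient_eq_mul_prod_factors n)
  push_cast at h
  exact h

theorem card_le_count_of_forall_lt {p : ℕ → Prop} [DecidablePred p] {S : Finset ℕ}
    (hS : ∀ x ∈ S, p x) {n : ℕ} (hn : ∀ x ∈ S, x < n) : #S ≤ count p n := by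
  rw [count_eq_card_filter_range]
  exact card_le_card fun x hx => mem_filter.2 ⟨mem_range.2 (hn x hx), hS x hx⟩

/-- Induct on `S` by its largest element `q`: the `#S - 1` other elements of `S` are primes below
`q`, so `q` is at least the prime of index `#S - 1`. -/
theorem prod_range_nth_prime_le_prod {f : ℕ → ℝ} (hf : MonotoneOn f {p | p.Prime})
    (hf₀ : ∀ p, p.Prime → 0 ≤ f p) (S : Finset ℕ) (hS : ∀ p ∈ S, p.Prime) :
    ∏ i ∈ range #S, f (nth Nat.Prime i) ≤ ∏ p ∈ S, f p := by
  induction S using Finset.induction_on_max with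
  | empty => simp
  | insert q S hlt ih =>
    have hqS : q ∉ S := fun h => (hlt q h).false
    have hq : q.Prime := hS q (mem_insert_self q S)
    have hS' : ∀ p ∈ S, p.Prime := fun p hp => hS p (mem_insert_of_mem hp)
    have hnth : nth Nat.Prime #S ≤ q := by
      have hcard := card_le_count_of_forall_lt (p := Nat.Prime) hS (n := q + 1) fun p hp => by
        rcases mem_insert.1 hp with rfl | hp
        · exact lt_add_one p
        · exact (hlt p hp).trans (lt_add_one q)
      rw [card_insert_of_notMem hqS] at hcard
      exact Nat.lt_add_one_iff.1 (nth_lt_of_lt_count hcard)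
    rw [card_insert_of_notMem hqS, prod_range_succ, prod_insert hqS, mul_comm (f q)]
    exact mul_le_mul (ih hS') (hf (prime_nth_prime _) hq hnth) (hf₀ _ (prime_nth_prime _))
      (prod_nonneg fun p hp => hf₀ p (hS' p hp))

end Nat

theorem le_liminf_div_of_div_mul_le {f : ℕ → ℕ} (hf : ∀ x, f x ≤ x) {L c : ℕ} (hL : 0 < L)
    (h : ∀ x, x / L * c ≤ f x) : (c : ℝ) / L ≤ liminf (fun x => (f x : ℝ) / x) atTop := by
  have hlower : ∀ᶠ x : ℕ in atTop, (c : ℝ) / L * (1 - L / x) ≤ (f x : ℝ) / x := by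
    filter_upwards [eventually_gt_atTop 0] with x hx
    have hx' : (0 : ℝ) < x := by exact_mod_cast hx
    have hfloor : (x : ℝ) / L - 1 ≤ (x / L : ℕ) := by
      rw [← Nat.floor_div_eq_div (K := ℝ)]
      exact (Nat.sub_one_lt_floor _).le
    rw [le_div_iff₀ hx']
    calc (c : ℝ) / L * (1 - L / x) * x = ((x : ℝ) / L - 1) * c := by field_simp
      _ ≤ (x / L : ℕ) * c := by gcongr
      _ ≤ f x := by exact_mod_cast h x
  have htend : Tendsto (fun x : ℕ => (c : ℝ) / L * (1 - L / x)) atTop (𝓝 (c / L)) := by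
    simpa using ((tendsto_const_div_atTop_nhds_zero_nat (L : ℝ)).const_sub 1).const_mul
      ((c : ℝ) / L)
  have hbdd : IsBoundedUnder (· ≤ ·) atTop (fun x : ℕ => (f x : ℝ) / x) :=
    isBoundedUnder_of ⟨1, fun x => div_le_one_of_le₀ (by exact_mod_cast hf x) x.cast_nonneg⟩
  rw [← htend.liminf_eq]
  exact liminf_le_liminf hlower htend.isBoundedUnder_ge hbdd.isCoboundedUnder_ge

namespace MC2

variable {A B : Set ℕ}

theorem cnt_le (h : MC2 A B) (x : ℕ) : cnt A x ≤ x := by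
  calc cnt A x ≤ (Icc 1 x : Set ℕ).ncard :=
        Set.ncard_le_ncard (fun a ha => by simpa using ⟨h.1 ha.1, ha.2⟩) (Icc 1 x).finite_toSet
    _ = x := by simp

theorem mem_left_of_coprime (h : MC2 A B) {P n : ℕ} (hP : ∀ b ∈ B, b ≠ 1 → ¬ P.Coprime b)
    (hn : 0 < n) (hPn : P.Coprime n) : n ∈ A := by
  obtain ⟨a, ha, b, hb, rfl⟩ := h.2.2 n hn
  have hb1 : b = 1 := by_contra fun hb1 => hP b hb hb1 (hPn.coprime_dvd_right (dvd_mul_left b a))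
  simpa [hb1] using ha

theorem card_filter_coprime_le_cnt (h : MC2 A B) {P : ℕ} (hP : ∀ b ∈ B, b ≠ 1 → ¬ P.Coprime b)
    (x : ℕ) : #{n ∈ Icc 1 x | P.Coprime n} ≤ cnt A x := by
  rw [cnt, ← Set.ncard_coe_finset]
  refine Set.ncard_le_ncard (fun n hn => ?_) ((Set.finite_Iic x).subset fun a ha => ha.2)
  simp only [coe_filter, mem_Icc, Set.mem_ofPred_eq] at hn
  exact ⟨h.mem_left_of_coprime hP (by omega) hn.2, hn.1.2⟩

end MC2

theorem stmt_16 (A B : Set ℕ) (hAB : MC2 A B) (k : ℕ) (hBfin : B.Finite)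
    (hBcard : B.ncard = k) :
    (∏ i ∈ Finset.range k, (1 - 1 / ((Nat.nth Nat.Prime i : ℕ) : ℝ))) ≤
      Filter.liminf (fun x : ℕ => (cnt A x : ℝ) / (x : ℝ)) Filter.atTop := by
  set Q := (hBfin.toFinset.erase 1).image Nat.minFac
  have hQ : ∀ q ∈ Q, q.Prime := by
    simp only [Q, mem_image, mem_erase]
    rintro _ ⟨b, ⟨hb1, -⟩, rfl⟩
    exact Nat.minFac_prime hb1
  have hQk : #Q ≤ k := hBcard ▸ Set.ncard_eq_toFinset_card B hBfin ▸
    card_image_le.trans card_erase_le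
  set P := ∏ q ∈ Q, q
  have hP : ∀ b ∈ B, b ≠ 1 → ¬ P.Coprime b := fun b hb hb1 =>
    Nat.not_coprime_of_dvd_of_dvd (Nat.minFac_prime hb1).one_lt
      (dvd_prod_of_mem _ (mem_image_of_mem _ (by simp [hb, hb1]))) (Nat.minFac_dvd b)
  have hPpos : (0 : ℝ) < P := by exact_mod_cast prod_pos fun q hq => (hQ q hq).pos
  have hdensity := le_liminf_div_of_div_mul_le hAB.cnt_le (by exact_mod_cast hPpos) fun x =>
    (Nat.div_mul_totient_le_card_filter_coprime P x).trans (hAB.card_filter_coprime_le_cnt hP x)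
  rw [Nat.totient_eq_mul_prod_one_sub_inv_real, Nat.primeFactors_prod hQ,
    mul_div_cancel_left₀ _ hPpos.ne'] at hdensity
  have hmono : MonotoneOn (fun p : ℕ => 1 - (p : ℝ)⁻¹) {p | p.Prime} := fun p hp q _ hpq => by
    have : (0 : ℝ) < p := by exact_mod_cast hp.pos
    dsimp only
    gcongr
  have hnonneg (p : ℕ) (hp : p.Prime) : 0 ≤ 1 - (p : ℝ)⁻¹ :=
    sub_nonneg.2 (inv_le_one_of_one_le₀ (by exact_mod_cast hp.one_lt.le))
  refine le_trans ?_ ((Nat.prod_range_nth_prime_le_prod hmono hnonneg Q hQ).trans hdensity)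
  simp only [one_div]
  exact prod_le_prod_of_subset_of_le_one (range_subset_range.2 hQk)
    (fun i _ => hnonneg _ (Nat.prime_nth_prime i))
    (fun i _ _ => sub_le_self _ (inv_nonneg.2 (Nat.cast_nonneg _)))
end
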